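/- Let U ⊆ ℂ² be a polydisc centered at 0, W = (ω_1,…,ω_k) a k-web on U, X a transverse infinitesimal automorphism of W with X(0) ≠ (0,0), u_1,…,u_k the canonical first integrals with respect to X, and x̃ a first integral of X (x̃(0) = 0, X(x̃) = 0, dx̃(0) ≠ (0,0)). Let c_1,…,c_k ∈ ℂ and r ∈ ℕ be such that c_1·u_1^r·du_1 + ⋯ + c_k·u_k^r·du_k = 0 on U. Then there exists a holomorphic function g defined near 0 ∈ ℂ, with germ at 0 unique, such that c_1·u_1^{r+1}·du_1 + ⋯ + c_k·u_k^{r+1}·du_k + (g∘x̃)·dx̃ = 0 on a neighborhood of 0. -/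

import Mathlib

open Complex Filter Topology

noncomputable section

/-- A point of the complex plane `ℂ²`. -/
abbrev Pt : Type := ℂ × ℂ

/-- A (holomorphic) 1-form `A dx + B dy` on (an open subset of) `ℂ²`,
identified with the pair of functions `(A, B)`. -/
abbrev Form1 : Type := (Pt → ℂ) × (Pt → ℂ)

/-- The complex partial derivative `∂f/∂x`. -/
noncomputable def pdx (f : Pt → ℂ) (p : Pt) : ℂ := fderiv ℂ f p (1, 0)

/-- The complex partial derivative `∂f/∂y`. -/
noncomputable def pdy (f : Pt → ℂ) (p : Pt) : ℂ := fderiv ℂ f p (0, 1)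

/-- The derivative `X(f) = P ∂f/∂x + Q ∂f/∂y` of `f` along the vector field `X = (P, Q)`. -/
noncomputable def Xf (P Q f : Pt → ℂ) (p : Pt) : ℂ := P p * pdx f p + Q p * pdy f p

/-- The contraction `i_X ω = A·P + B·Q` of the 1-form `ω = (A,B)` with `X = (P,Q)`. -/
noncomputable def contr (P Q : Pt → ℂ) (ω : Form1) (p : Pt) : ℂ := ω.1 p * P p + ω.2 p * Q p

/-- The wedge `ω ∧ ω' = A·B' − B·A'` of two 1-forms, as a function. -/
noncomputable def wedge (ω ω' : Form1) (p : Pt) : ℂ := ω.1 p * ω'.2 p - ω.2 p * ω'.1 p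

/-- The differential `df = (∂f/∂x, ∂f/∂y)` of a function. -/
noncomputable def fd (f : Pt → ℂ) : Form1 := (pdx f, pdy f)

/-- A 1-form `(A,B)` is closed on `U` if `∂A/∂y = ∂B/∂x` on `U`. -/
def IsClosedOn (ω : Form1) (U : Set Pt) : Prop := ∀ p ∈ U, pdy ω.1 p = pdx ω.2 p

/-- The Lie derivative `L_X ω` of the 1-form `ω = (A,B)` with respect to `X = (P,Q)`:
`L_X ω = (X(A) + A ∂P/∂x + B ∂Q/∂x, X(B) + A ∂P/∂y + B ∂Q/∂y)`. -/
noncomputable def lie (P Q : Pt → ℂ) (ω : Form1) : Form1 :=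
  (fun p => Xf P Q ω.1 p + ω.1 p * pdx P p + ω.2 p * pdx Q p,
   fun p => Xf P Q ω.2 p + ω.1 p * pdy P p + ω.2 p * pdy Q p)

/-- A 1-form is holomorphic on `U` if both its components are. -/
def AnalyticForm (ω : Form1) (U : Set Pt) : Prop :=
  AnalyticOnNhd ℂ ω.1 U ∧ AnalyticOnNhd ℂ ω.2 U
/-- A `k`-web on `U`: a `k`-tuple of holomorphic 1-forms, each nonvanishing on `U`,
pairwise transverse at the origin. -/
structure IsWeb {k : ℕ} (ω : Fin k → Form1) (U : Set Pt) : Prop where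
  analytic : ∀ i, AnalyticForm (ω i) U
  nonvanishing : ∀ i, ∀ p ∈ U, ((ω i).1 p, (ω i).2 p) ≠ (0, 0)
  transverse : ∀ i j, i ≠ j → wedge (ω i) (ω j) 0 ≠ 0

/-- An abelian relation `(η_1, …, η_k)` on `V` of the web given by `(ω_1, …, ω_k)`. -/
structure IsAbelianRelOn {k : ℕ} (ω : Fin k → Form1) (η : Fin k → Form1) (V : Set Pt) :
    Prop where
  analytic : ∀ i, AnalyticForm (η i) V
  closed : ∀ i, IsClosedOn (η i) V
  tangent : ∀ i, ∀ p ∈ V, wedge (η i) (ω i) p = 0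
  sum_fst : ∀ p ∈ V, ∑ i, (η i).1 p = 0
  sum_snd : ∀ p ∈ V, ∑ i, (η i).2 p = 0

/-- `U` is a polydisc centered at the origin. -/
def IsPolydisc (U : Set Pt) : Prop :=
  ∃ r s : ℝ, 0 < r ∧ 0 < s ∧ U = Metric.ball (0 : ℂ) r ×ˢ Metric.ball (0 : ℂ) s

/-- `X = (P,Q)` is an infinitesimal automorphism of the web `(ω_1, …, ω_k)` on `U`:
`(L_X ω_i) ∧ ω_i = 0` on `U` for all `i`. -/
def IsInfAut (P Q : Pt → ℂ) {k : ℕ} (ω : Fin k → Form1) (U : Set Pt) : Prop :=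
  ∀ i, ∀ p ∈ U, wedge (lie P Q (ω i)) (ω i) p = 0

/-- `X = (P,Q)` is transverse to the web `(ω_1, …, ω_k)` on `U`:
`i_X ω_i` is nonvanishing on `U` for all `i`. -/
def IsTransverseTo (P Q : Pt → ℂ) {k : ℕ} (ω : Fin k → Form1) (U : Set Pt) : Prop :=
  ∀ i, ∀ p ∈ U, contr P Q (ω i) p ≠ 0

/-- `u` is the canonical first integral of the 1-form `ω` with respect to `X = (P,Q)` on `U`:
`u` is holomorphic, `u(0) = 0` and `du = ω / (i_X ω)`. -/
def IsCanonicalFI (P Q : Pt → ℂ) (ω : Form1) (u : Pt → ℂ) (U : Set Pt) : Prop :=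
  AnalyticOnNhd ℂ u U ∧ u 0 = 0 ∧
    ∀ p ∈ U, pdx u p = ω.1 p / contr P Q ω p ∧ pdy u p = ω.2 p / contr P Q ω p

/-!
Since `X(uᵢ) = 1`, the potential `S = ∑ cᵢ uᵢ^(r+2) / (r+2)` has `X(S) = ∑ cᵢ uᵢ^(r+1)`, and this
function vanishes on `U`: its differential is `(r+1) ∑ cᵢ uᵢ^r duᵢ = 0` and it vanishes at `0`.
So `S` and `x̃` are first integrals of the nonvanishing field `X`; as `dx̃ ≠ 0`, the kernel of
`dx̃` is spanned by `X`, hence killed by `dS`. In a chart `(x̃, ℓ)` given by the inverse function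
theorem, `S` therefore depends on the first coordinate only, `S = G ∘ x̃`, and `g = -G'` works.
For uniqueness, `dx̃ ≠ 0` near `0` forces `g ∘ x̃ = g' ∘ x̃` near `0`, and `x̃` maps neighbourhoods
of `0` onto neighbourhoods of `0` by the open mapping theorem.
-/

theorem ContinuousLinearMap.apply_eq_fst_mul_add_snd_mul (L : Pt →L[ℂ] ℂ) (v : Pt) :
    L v = v.1 * L (1, 0) + v.2 * L (0, 1) := by
  conv_lhs => rw [show v = v.1 • ((1 : ℂ), (0 : ℂ)) + v.2 • ((0 : ℂ), (1 : ℂ)) by simp]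
  rw [map_add, map_smul, map_smul, smul_eq_mul, smul_eq_mul]

theorem ContinuousLinearMap.eq_zero_iff_apply_eq_zero (L : Pt →L[ℂ] ℂ) :
    L = 0 ↔ L (1, 0) = 0 ∧ L (0, 1) = 0 := by
  refine ⟨fun h => by simp [h], fun ⟨h₁, h₂⟩ => ?_⟩
  refine ContinuousLinearMap.ext fun v => ?_
  simp [L.apply_eq_fst_mul_add_snd_mul v, h₁, h₂]

theorem Xf_eq_fderiv_apply (P Q f : Pt → ℂ) (p : Pt) :
    Xf P Q f p = fderiv ℂ f p (P p, Q p) := by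
  rw [ContinuousLinearMap.apply_eq_fst_mul_add_snd_mul]
  rfl

theorem Module.Dual.apply_eq_zero_of_finrank_eq_two {K V : Type*} [Field K] [AddCommGroup V]
    [Module K V] [FiniteDimensional K V] (hV : finrank K V = 2) {L M : Module.Dual K V}
    (hL : L ≠ 0) {x : V} (hx : x ≠ 0) (hLx : L x = 0) (hMx : M x = 0) {v : V} (hLv : L v = 0) :
    M v = 0 := by
  have hker : finrank K (LinearMap.ker L) = 1 := by
    have := Module.Dual.finrank_ker_add_one_of_ne_zero hL
    omega
  obtain ⟨μ, hμ⟩ := (finrank_eq_one_iff_of_nonzero' (⟨x, hLx⟩ : LinearMap.ker L)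
    fun h => hx (congrArg Subtype.val h)).1 hker ⟨v, hLv⟩
  have hv : μ • x = v := congrArg Subtype.val hμ
  simp [← hv, hMx]

theorem ContinuousLinearMap.apply_eq_zero_of_apply_eq_zero {L M : Pt →L[ℂ] ℂ} (hL : L ≠ 0)
    {x : Pt} (hx : x ≠ 0) (hLx : L x = 0) (hMx : M x = 0) {v : Pt} (hLv : L v = 0) : M v = 0 :=
  Module.Dual.apply_eq_zero_of_finrank_eq_two (L := (L : Pt →ₗ[ℂ] ℂ)) (M := (M : Pt →ₗ[ℂ] ℂ))
    (by simp) (by exact_mod_cast hL) hx hLx hMx hLv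

def det2 (L M : Pt →L[ℂ] ℂ) : ℂ := L (1, 0) * M (0, 1) - L (0, 1) * M (1, 0)

theorem exists_det2_ne_zero {L : Pt →L[ℂ] ℂ} (hL : L ≠ 0) : ∃ M, det2 L M ≠ 0 := by
  rw [Ne, L.eq_zero_iff_apply_eq_zero, not_and_or] at hL
  rcases hL with h | h
  · exact ⟨ContinuousLinearMap.snd ℂ ℂ ℂ, by simpa [det2] using h⟩
  · exact ⟨ContinuousLinearMap.fst ℂ ℂ ℂ, by simpa [det2] using h⟩

theorem exists_equiv_of_det2_ne_zero {L M : Pt →L[ℂ] ℂ} (h : det2 L M ≠ 0) :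
    ∃ E : Pt ≃L[ℂ] Pt, (E : Pt →L[ℂ] Pt) = L.prod M := by
  have hinj : Function.Injective (L.prod M : Pt →ₗ[ℂ] Pt) := by
    rw [← LinearMap.ker_eq_bot, LinearMap.ker_eq_bot']
    intro v hv
    have hL : L v = 0 := congrArg Prod.fst hv
    have hM : M v = 0 := congrArg Prod.snd hv
    rw [L.apply_eq_fst_mul_add_snd_mul] at hL
    rw [M.apply_eq_fst_mul_add_snd_mul] at hM
    have h₁ : det2 L M * v.1 = 0 := by unfold det2; linear_combination M (0, 1) * hL - L (0, 1) * hM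
    have h₂ : det2 L M * v.2 = 0 := by unfold det2; linear_combination L (1, 0) * hM - M (1, 0) * hL
    exact Prod.ext ((mul_eq_zero.1 h₁).resolve_left h) ((mul_eq_zero.1 h₂).resolve_left h)
  exact ⟨(LinearEquiv.ofInjectiveEndo _ hinj).toContinuousLinearEquiv, rfl⟩

section PowerSums

variable {ι E : Type*} [Fintype ι] [NormedAddCommGroup E] [NormedSpace ℂ E]

def powForm (c : ι → ℂ) (u : ι → E → ℂ) (n : ℕ) (p : E) : E →L[ℂ] ℂ :=
  ∑ i, (c i * u i p ^ n) • fderiv ℂ (u i) p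

def powPrimitive (c : ι → ℂ) (u : ι → E → ℂ) (n : ℕ) (p : E) : ℂ :=
  ∑ i, c i / (n + 1) * u i p ^ (n + 1)

variable {c : ι → ℂ} {u : ι → E → ℂ}

theorem hasFDerivAt_powPrimitive (n : ℕ) {p : E} (hu : ∀ i, DifferentiableAt ℂ (u i) p) :
    HasFDerivAt (powPrimitive c u n) (powForm c u n p) p := by
  refine HasFDerivAt.fun_sum fun i _ => ?_
  refine (((hu i).hasFDerivAt.pow (n + 1)).const_mul (c i / (n + 1))).congr_fderiv ?_
  rw [smul_smul, nsmul_eq_mul, Nat.add_sub_cancel]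
  congr 1
  push_cast
  field_simp

theorem analyticAt_powPrimitive (n : ℕ) {p : E} (hu : ∀ i, AnalyticAt ℂ (u i) p) :
    AnalyticAt ℂ (powPrimitive c u n) p := by
  unfold powPrimitive
  fun_prop

theorem sum_mul_pow_succ_eq_zero {U : Set E} (hUo : IsOpen U) (hUc : IsPreconnected U) {a : E}
    (ha : a ∈ U) (hua : ∀ i, u i a = 0) (hu : ∀ i, ∀ p ∈ U, DifferentiableAt ℂ (u i) p) {n : ℕ}
    (hform : ∀ p ∈ U, powForm c u n p = 0) {p : E} (hp : p ∈ U) :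
    ∑ i, c i * u i p ^ (n + 1) = 0 := by
  have hconst : powPrimitive c u n p = powPrimitive c u n a :=
    hUo.is_const_of_fderiv_eq_zero hUc
      (fun q hq => (hasFDerivAt_powPrimitive n (hu · q hq)).differentiableAt.differentiableWithinAt)
      (fun q hq => by rw [(hasFDerivAt_powPrimitive n (hu · q hq)).fderiv, hform q hq]; rfl) hp ha
  have hprim : powPrimitive c u n p = 0 := by rw [hconst]; simp [powPrimitive, hua]
  calc ∑ i, c i * u i p ^ (n + 1) = (n + 1) * powPrimitive c u n p := by
        simp only [powPrimitive, Finset.mul_sum]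
        refine Finset.sum_congr rfl fun i _ => ?_
        field_simp
    _ = 0 := by rw [hprim, mul_zero]

theorem fderiv_powPrimitive_apply_eq_zero {n : ℕ} {p v : E}
    (hu : ∀ i, DifferentiableAt ℂ (u i) p) (hv : ∀ i, fderiv ℂ (u i) p v = 1)
    (hsum : ∑ i, c i * u i p ^ n = 0) : fderiv ℂ (powPrimitive c u n) p v = 0 := by
  simp [(hasFDerivAt_powPrimitive n hu).fderiv, powForm, hv, hsum]

end PowerSums

theorem exists_eventually_eq_comp_fst {H : Pt → ℂ} {q₀ : Pt}
    (hH : ∀ᶠ q in 𝓝 q₀, DifferentiableAt ℂ H q ∧ fderiv ℂ H q (0, 1) = 0) :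
    ∃ D ∈ 𝓝 q₀.1, ∃ G : ℂ → ℂ, AnalyticOnNhd ℂ G D ∧ ∀ᶠ q in 𝓝 q₀, q.1 ∈ D ∧ H q = G q.1 := by
  obtain ⟨ε, hε, hball⟩ := Metric.eventually_nhds_iff_ball.1 hH
  have hmem {s t : ℂ} : (s, t) ∈ Metric.ball q₀ ε ↔
      s ∈ Metric.ball q₀.1 ε ∧ t ∈ Metric.ball q₀.2 ε := by
    rw [← ball_prod_same]; rfl
  have hslice {s : ℂ} (hs : s ∈ Metric.ball q₀.1 ε) {t : ℂ} (ht : t ∈ Metric.ball q₀.2 ε) :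
      H (s, t) = H (s, q₀.2) := by
    have hderiv {t} (ht : t ∈ Metric.ball q₀.2 ε) : HasDerivAt (fun t => H (s, t)) 0 t := by
      obtain ⟨hd, hzero⟩ := hball _ (hmem.2 ⟨hs, ht⟩)
      have h := hd.hasFDerivAt.comp_hasDerivAt t ((hasDerivAt_const t s).prodMk (hasDerivAt_id t))
      rwa [hzero] at h
    exact Metric.isOpen_ball.is_const_of_deriv_eq_zero (convex_ball _ _).isPreconnected
      (fun t ht => (hderiv ht).differentiableAt.differentiableWithinAt)
      (fun t ht => (hderiv ht).deriv) ht (Metric.mem_ball_self hε)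
  refine ⟨_, Metric.ball_mem_nhds _ hε, fun s => H (s, q₀.2), ?_, ?_⟩
  · refine DifferentiableOn.analyticOnNhd (fun s hs => ?_) Metric.isOpen_ball
    have hd := (hball _ (hmem.2 ⟨hs, Metric.mem_ball_self hε⟩)).1
    exact (hd.comp s (differentiableAt_id.prodMk (differentiableAt_const _))).differentiableWithinAt
  · filter_upwards [Metric.ball_mem_nhds q₀ hε] with q hq
    exact ⟨(hmem.1 hq).1, hslice (hmem.1 hq).1 (hmem.1 hq).2⟩

/-- The chart `p ↦ (f p, ℓ p)` maps the kernel of `df` onto the second coordinate axis. -/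
theorem fderiv_comp_symm_apply_snd_eq_zero {f S : Pt → ℂ} {ℓ : Pt →L[ℂ] ℂ}
    (Φ : OpenPartialHomeomorph Pt Pt) (hΦ : ⇑Φ = fun p => (f p, ℓ p)) {q : Pt}
    (hq : q ∈ Φ.target) (hf : DifferentiableAt ℂ f (Φ.symm q))
    (hS : DifferentiableAt ℂ S (Φ.symm q)) (hdet : det2 (fderiv ℂ f (Φ.symm q)) ℓ ≠ 0)
    (hker : ∀ v, fderiv ℂ f (Φ.symm q) v = 0 → fderiv ℂ S (Φ.symm q) v = 0) :
    DifferentiableAt ℂ (S ∘ Φ.symm) q ∧ fderiv ℂ (S ∘ Φ.symm) q (0, 1) = 0 := by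
  obtain ⟨E, hE⟩ := exists_equiv_of_det2_ne_zero hdet
  have hΦd : HasFDerivAt Φ (E : Pt →L[ℂ] Pt) (Φ.symm q) := by
    rw [hΦ, hE]
    exact hf.hasFDerivAt.prodMk ℓ.hasFDerivAt
  have hSΦ := hS.hasFDerivAt.comp q (Φ.hasFDerivAt_symm hq hΦd)
  refine ⟨hSΦ.differentiableAt, ?_⟩
  rw [hSΦ.fderiv]
  refine hker _ ?_
  have h := congrArg Prod.fst (E.apply_symm_apply (0, 1))
  rw [← ContinuousLinearEquiv.coe_coe E, hE] at h
  simpa using h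

theorem exists_eventually_eq_comp_of_ker_le {f S : Pt → ℂ} {a : Pt} (hf : AnalyticAt ℂ f a)
    (hS : AnalyticAt ℂ S a) (hdf : fderiv ℂ f a ≠ 0)
    (hker : ∀ᶠ p in 𝓝 a, ∀ v, fderiv ℂ f p v = 0 → fderiv ℂ S p v = 0) :
    ∃ D ∈ 𝓝 (f a), ∃ G : ℂ → ℂ, AnalyticOnNhd ℂ G D ∧ ∀ᶠ p in 𝓝 a, f p ∈ D ∧ S p = G (f p) := by
  obtain ⟨ℓ, hℓ⟩ := exists_det2_ne_zero hdf
  obtain ⟨E, hE⟩ := exists_equiv_of_det2_ne_zero hℓ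
  have hdet : ∀ᶠ p in 𝓝 a, det2 (fderiv ℂ f p) ℓ ≠ 0 := by
    have hcont : ContinuousAt (fderiv ℂ f) a := hf.fderiv.continuousAt
    refine ContinuousAt.eventually_ne ?_ hℓ
    unfold det2
    fun_prop
  have hstrict : HasStrictFDerivAt (fun p => (f p, ℓ p)) (E : Pt →L[ℂ] Pt) a := by
    rw [hE]; exact hf.hasStrictFDerivAt.prodMk ℓ.hasStrictFDerivAt
  set Φ := hstrict.toOpenPartialHomeomorph _
  have ha : a ∈ Φ.source := hstrict.mem_toOpenPartialHomeomorph_source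
  have hsymm : Tendsto Φ.symm (𝓝 (Φ a)) (𝓝 a) := by
    have h := Φ.continuousAt_symm (Φ.map_source ha)
    rwa [ContinuousAt, Φ.left_inv ha] at h
  have hgood := (hf.eventually_analyticAt.and hS.eventually_analyticAt).and (hdet.and hker)
  obtain ⟨D, hD, G, hG, hSG⟩ := exists_eventually_eq_comp_fst (H := S ∘ Φ.symm) (q₀ := Φ a) <| by
    filter_upwards [Φ.open_target.mem_nhds (Φ.map_source ha), hsymm.eventually hgood]
      with q hq ⟨⟨hfq, hSq⟩, hdq, hkq⟩
    exact fderiv_comp_symm_apply_snd_eq_zero Φ rfl hq hfq.differentiableAt hSq.differentiableAt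
      hdq hkq
  refine ⟨D, hD, G, hG, ?_⟩
  filter_upwards [Φ.open_source.mem_nhds ha, Φ.continuousAt ha hSG] with p hp ⟨hpD, hpG⟩
  rw [Function.comp_apply, Φ.left_inv hp] at hpG
  exact ⟨hpD, hpG⟩

theorem exists_fderiv_eq_smul_of_ker_le {f S : Pt → ℂ} {a : Pt} (hf : AnalyticAt ℂ f a)
    (hS : AnalyticAt ℂ S a) (hdf : fderiv ℂ f a ≠ 0)
    (hker : ∀ᶠ p in 𝓝 a, ∀ v, fderiv ℂ f p v = 0 → fderiv ℂ S p v = 0) :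
    ∃ D ∈ 𝓝 (f a), ∃ g : ℂ → ℂ, AnalyticOnNhd ℂ g D ∧
      ∀ᶠ p in 𝓝 a, f p ∈ D ∧ fderiv ℂ S p = g (f p) • fderiv ℂ f p := by
  obtain ⟨D, hD, G, hG, hSG⟩ := exists_eventually_eq_comp_of_ker_le hf hS hdf hker
  refine ⟨D, hD, deriv G, hG.deriv, ?_⟩
  filter_upwards [hSG.eventually_nhds, hf.eventually_analyticAt] with p hp hfp
  have hGd : HasDerivAt G (deriv G (f p)) (f p) :=
    (hG _ hp.self_of_nhds.1).differentiableAt.hasDerivAt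
  have hSp : S =ᶠ[𝓝 p] G ∘ f := hp.mono fun q hq => hq.2
  exact ⟨hp.self_of_nhds.1,
    hSp.fderiv_eq.trans (hGd.comp_hasFDerivAt p hfp.differentiableAt.hasFDerivAt).fderiv⟩

theorem exists_fderiv_eq_smul_of_fderiv_apply_eq_zero {f S : Pt → ℂ} {a : Pt}
    (hf : AnalyticAt ℂ f a) (hS : AnalyticAt ℂ S a) (hdf : fderiv ℂ f a ≠ 0) {X : Pt → Pt}
    (hX : ContinuousAt X a) (hXa : X a ≠ 0) (hXf : ∀ᶠ p in 𝓝 a, fderiv ℂ f p (X p) = 0)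
    (hXS : ∀ᶠ p in 𝓝 a, fderiv ℂ S p (X p) = 0) :
    ∃ D ∈ 𝓝 (f a), ∃ g : ℂ → ℂ, AnalyticOnNhd ℂ g D ∧
      ∀ᶠ p in 𝓝 a, f p ∈ D ∧ fderiv ℂ S p = g (f p) • fderiv ℂ f p := by
  refine exists_fderiv_eq_smul_of_ker_le hf hS hdf ?_
  filter_upwards [hX.eventually_ne hXa, hf.fderiv.continuousAt.eventually_ne hdf, hXf, hXS]
    with p hXp hdfp hXfp hXSp
  exact fun v => ContinuousLinearMap.apply_eq_zero_of_apply_eq_zero hdfp hXp hXfp hXSp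

theorem eventuallyEq_of_add_comp_smul_fderiv_eq_zero {E : Type*} [NormedAddCommGroup E]
    [NormedSpace ℂ E] {f : E → ℂ} {a : E} (hf : AnalyticAt ℂ f a) (hdf : fderiv ℂ f a ≠ 0)
    {Λ : E → E →L[ℂ] ℂ} {g g' : ℂ → ℂ} (hg : ∀ᶠ p in 𝓝 a, Λ p + g (f p) • fderiv ℂ f p = 0)
    (hg' : ∀ᶠ p in 𝓝 a, Λ p + g' (f p) • fderiv ℂ f p = 0) :
    g =ᶠ[𝓝 (f a)] g' := by
  have hopen : 𝓝 (f a) ≤ map f (𝓝 a) := hf.eventually_constant_or_nhds_le_map_nhds.resolve_left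
    fun hconst => hdf <| by
      rw [Filter.EventuallyEq.fderiv_eq (f₁ := f) (f := fun _ => f a) hconst]; simp
  refine hopen (Filter.eventually_map.2 ?_)
  filter_upwards [hg, hg', hf.fderiv.continuousAt.eventually_ne hdf] with p hp hp' hdp
  exact smul_left_injective ℂ hdp (add_left_cancel (hp.trans hp'.symm))

section Pt

variable {ι : Type*} [Fintype ι]

theorem powForm_eq_zero_iff (c : ι → ℂ) (u : ι → Pt → ℂ) (n : ℕ) (p : Pt) :
    powForm c u n p = 0 ↔
      ∑ i, c i * u i p ^ n * pdx (u i) p = 0 ∧ ∑ i, c i * u i p ^ n * pdy (u i) p = 0 := by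
  simp [ContinuousLinearMap.eq_zero_iff_apply_eq_zero, powForm, pdx, pdy]

theorem powForm_add_smul_fderiv_eq_zero_iff (c : ι → ℂ) (u : ι → Pt → ℂ) (n : ℕ) (z : ℂ)
    (f : Pt → ℂ) (p : Pt) :
    powForm c u n p + z • fderiv ℂ f p = 0 ↔
      ∑ i, c i * u i p ^ n * pdx (u i) p + z * pdx f p = 0 ∧
        ∑ i, c i * u i p ^ n * pdy (u i) p + z * pdy f p = 0 := by
  simp [ContinuousLinearMap.eq_zero_iff_apply_eq_zero, powForm, pdx, pdy]

end Pt

theorem IsPolydisc.isOpen {U : Set Pt} (hU : IsPolydisc U) : IsOpen U := by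
  obtain ⟨r, s, -, -, rfl⟩ := hU
  exact Metric.isOpen_ball.prod Metric.isOpen_ball

theorem IsPolydisc.zero_mem {U : Set Pt} (hU : IsPolydisc U) : (0 : Pt) ∈ U := by
  obtain ⟨r, s, hr, hs, rfl⟩ := hU
  exact ⟨Metric.mem_ball_self hr, Metric.mem_ball_self hs⟩

theorem IsPolydisc.isPreconnected {U : Set Pt} (hU : IsPolydisc U) : IsPreconnected U := by
  obtain ⟨r, s, -, -, rfl⟩ := hU
  exact ((convex_ball _ _).prod (convex_ball _ _)).isPreconnected

theorem IsCanonicalFI.fderiv_apply_eq_one {P Q : Pt → ℂ} {ω : Form1} {u : Pt → ℂ} {U : Set Pt}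
    (hu : IsCanonicalFI P Q ω u U) {p : Pt} (hp : p ∈ U) (hω : contr P Q ω p ≠ 0) :
    fderiv ℂ u p (P p, Q p) = 1 := by
  rw [← Xf_eq_fderiv_apply, Xf, (hu.2.2 p hp).1, (hu.2.2 p hp).2]
  rw [mul_div_assoc', mul_div_assoc', ← add_div, div_eq_one_iff_eq hω, contr]
  ring

theorem stmt_9_general (k : ℕ) (U : Set Pt) (hU : IsPolydisc U) (ω : Fin k → Form1)
    (P Q : Pt → ℂ)
    (hP : AnalyticOnNhd ℂ P U) (hQ : AnalyticOnNhd ℂ Q U)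
    (htr : IsTransverseTo P Q ω U)
    (hX0 : (P 0, Q 0) ≠ (0, 0))
    (u : Fin k → Pt → ℂ) (hu : ∀ i, IsCanonicalFI P Q (ω i) (u i) U)
    (xt : Pt → ℂ) (hxt : AnalyticOnNhd ℂ xt U) (hxt0 : xt 0 = 0)
    (hXxt : ∀ p ∈ U, Xf P Q xt p = 0) (hdxt0 : (pdx xt 0, pdy xt 0) ≠ (0, 0))
    (c : Fin k → ℂ) (r : ℕ)
    (hrel : ∀ p ∈ U, ∑ i, c i * u i p ^ r * pdx (u i) p = 0 ∧
                     ∑ i, c i * u i p ^ r * pdy (u i) p = 0) :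
    ∃ D ∈ 𝓝 (0 : ℂ), ∃ g : ℂ → ℂ, AnalyticOnNhd ℂ g D ∧
      (∃ V ∈ 𝓝 (0 : Pt), (∀ p ∈ V, xt p ∈ D) ∧
        ∀ p ∈ V, ∑ i, c i * u i p ^ (r + 1) * pdx (u i) p + g (xt p) * pdx xt p = 0 ∧
                 ∑ i, c i * u i p ^ (r + 1) * pdy (u i) p + g (xt p) * pdy xt p = 0) ∧
      (∀ (D' : Set ℂ), D' ∈ 𝓝 (0 : ℂ) → ∀ g' : ℂ → ℂ, AnalyticOnNhd ℂ g' D' →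
        (∃ V' ∈ 𝓝 (0 : Pt), (∀ p ∈ V', xt p ∈ D') ∧
          ∀ p ∈ V', ∑ i, c i * u i p ^ (r + 1) * pdx (u i) p + g' (xt p) * pdx xt p = 0 ∧
                    ∑ i, c i * u i p ^ (r + 1) * pdy (u i) p + g' (xt p) * pdy xt p = 0) →
        ∃ W ∈ 𝓝 (0 : ℂ), Set.EqOn g g' W) := by
  have hU0 := hU.zero_mem
  have hUn : U ∈ 𝓝 0 := hU.isOpen.mem_nhds hU0
  have hud : ∀ i, ∀ p ∈ U, DifferentiableAt ℂ (u i) p := fun i p hp =>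
    ((hu i).1 p hp).differentiableAt
  set S := powPrimitive c u (r + 1)
  have hXS : ∀ p ∈ U, fderiv ℂ S p (P p, Q p) = 0 := fun p hp =>
    fderiv_powPrimitive_apply_eq_zero (hud · p hp)
      (fun i => (hu i).fderiv_apply_eq_one hp (htr i p hp))
      (sum_mul_pow_succ_eq_zero hU.isOpen hU.isPreconnected hU0 (fun i => (hu i).2.1) hud
        (fun q hq => (powForm_eq_zero_iff c u r q).2 (hrel q hq)) hp)
  have hdxt : fderiv ℂ xt 0 ≠ 0 := fun h => hdxt0 (by simp [pdx, pdy, h])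
  obtain ⟨D, hD, g, hg, hSg⟩ := exists_fderiv_eq_smul_of_fderiv_apply_eq_zero (hxt 0 hU0)
    (analyticAt_powPrimitive _ fun i => (hu i).1 0 hU0) hdxt
    ((hP 0 hU0).continuousAt.prodMk (hQ 0 hU0).continuousAt) hX0
    (eventually_of_mem hUn fun p hp => (Xf_eq_fderiv_apply P Q xt p).symm.trans (hXxt p hp))
    (eventually_of_mem hUn hXS)
  have hsol : ∀ᶠ p in 𝓝 (0 : Pt),
      xt p ∈ D ∧ powForm c u (r + 1) p + (-g (xt p)) • fderiv ℂ xt p = 0 := by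
    filter_upwards [hSg, hUn] with p ⟨hpD, hpS⟩ hp
    refine ⟨hpD, ?_⟩
    rw [← (hasFDerivAt_powPrimitive (r + 1) (hud · p hp)).fderiv, hpS]
    exact add_eq_zero_iff_neg_eq.2 (neg_smul _ _).symm
  obtain ⟨V, hV, hVsol⟩ := hsol.exists_mem
  rw [hxt0] at hD
  refine ⟨D, hD, fun z => -g z, hg.neg, ⟨V, hV, fun p hp => (hVsol p hp).1,
    fun p hp => (powForm_add_smul_fderiv_eq_zero_iff ..).1 (hVsol p hp).2⟩, ?_⟩
  rintro D' - g' - ⟨V', hV', -, hV'sol⟩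
  obtain ⟨W, hW, hWeq⟩ := (eventuallyEq_of_add_comp_smul_fderiv_eq_zero (hxt 0 hU0) hdxt
    (g := fun z => -g z) (hsol.mono fun p hp => hp.2)
    (eventually_of_mem hV' fun p hp => (powForm_add_smul_fderiv_eq_zero_iff ..).2 (hV'sol p hp))
    ).exists_mem
  exact ⟨W, hxt0 ▸ hW, hWeq⟩

/-- With `W`, `X`, `u_i`, `x̃` as before, if
`∑ c_i u_i^r du_i = 0` on `U`, then there is a holomorphic `g` near `0 ∈ ℂ`, with germ
at `0` unique, such that `∑ c_i u_i^{r+1} du_i + (g∘x̃)·dx̃ = 0` near `0`. -/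
theorem stmt_9 (k : ℕ) (U : Set Pt) (hU : IsPolydisc U) (ω : Fin k → Form1)
    (hweb : IsWeb ω U) (P Q : Pt → ℂ)
    (hP : AnalyticOnNhd ℂ P U) (hQ : AnalyticOnNhd ℂ Q U)
    (hinf : IsInfAut P Q ω U) (htr : IsTransverseTo P Q ω U)
    (hX0 : (P 0, Q 0) ≠ (0, 0))
    (u : Fin k → Pt → ℂ) (hu : ∀ i, IsCanonicalFI P Q (ω i) (u i) U)
    (xt : Pt → ℂ) (hxt : AnalyticOnNhd ℂ xt U) (hxt0 : xt 0 = 0)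
    (hXxt : ∀ p ∈ U, Xf P Q xt p = 0) (hdxt0 : (pdx xt 0, pdy xt 0) ≠ (0, 0))
    (c : Fin k → ℂ) (r : ℕ)
    (hrel : ∀ p ∈ U, ∑ i, c i * u i p ^ r * pdx (u i) p = 0 ∧
                     ∑ i, c i * u i p ^ r * pdy (u i) p = 0) :
    ∃ D ∈ 𝓝 (0 : ℂ), ∃ g : ℂ → ℂ, AnalyticOnNhd ℂ g D ∧
      (∃ V ∈ 𝓝 (0 : Pt), (∀ p ∈ V, xt p ∈ D) ∧
        ∀ p ∈ V, ∑ i, c i * u i p ^ (r + 1) * pdx (u i) p + g (xt p) * pdx xt p = 0 ∧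
                 ∑ i, c i * u i p ^ (r + 1) * pdy (u i) p + g (xt p) * pdy xt p = 0) ∧
      (∀ (D' : Set ℂ), D' ∈ 𝓝 (0 : ℂ) → ∀ g' : ℂ → ℂ, AnalyticOnNhd ℂ g' D' →
        (∃ V' ∈ 𝓝 (0 : Pt), (∀ p ∈ V', xt p ∈ D') ∧
          ∀ p ∈ V', ∑ i, c i * u i p ^ (r + 1) * pdx (u i) p + g' (xt p) * pdx xt p = 0 ∧
                    ∑ i, c i * u i p ^ (r + 1) * pdy (u i) p + g' (xt p) * pdy xt p = 0) →
        ∃ W ∈ 𝓝 (0 : ℂ), Set.EqOn g g' W) :=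
  stmt_9_general k U hU ω P Q hP hQ htr hX0 u hu xt hxt hxt0 hXxt hdxt0 c r hrel
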